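/- arXiv:2302.04581 — 3 statements merged into one kernel-verified Lean document; each statement's English description precedes it below -/
import Mathlib

section
/- Let (M, v) be a chore instance with universal ordering, let τ ≥ 0 and n ≥ 1, and let D = (D_1, ..., D_n) be the bundle collection output by FFD(M, v, τ, n). Then for every k ∈ {1, ..., n}, D_k is lexicographically equal to B_k, the k-th benchmark bundle of D with respect to v and τ. -/
open scoped Classical

noncomputable section

variable {C : Type*} [LinearOrder C]

/-- Total cost of a bundle of chores: the sum of the chore costs. -/
def bundleCost (v : C → ℝ) (B : Finset C) : ℝ := ∑ c ∈ B, v c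

/-- The universal ordering is the ambient linear order on `C`, along which costs are
non-increasing; hence the `p`-th largest chore `B[p]` of a bundle `B` (ties broken by the
universal ordering) is the `p`-th element of `B` sorted along the order.
`nthCost v B p` is `v (B[p])` (1-indexed), with the convention `0` for `p > |B|`. -/
def nthCost (v : C → ℝ) (B : Finset C) (p : ℕ) : ℝ :=
  ((B.sort (· ≤ ·)).map v).getD (p - 1) 0

/-- `B1 =lex B2` : equal cost at each position. -/
def lexEq (v : C → ℝ) (B1 B2 : Finset C) : Prop :=
  ∀ p : ℕ, nthCost v B1 p = nthCost v B2 p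

/-- `B1 ≤lex B2`. -/
def lexLe (v : C → ℝ) (B1 B2 : Finset C) : Prop :=
  lexEq v B1 B2 ∨
    ∃ q : ℕ, nthCost v B1 q < nthCost v B2 q ∧ ∀ p < q, nthCost v B1 p = nthCost v B2 p

/-- `B1 <lex B2`. -/
def lexLt (v : C → ℝ) (B1 B2 : Finset C) : Prop :=
  lexLe v B1 B2 ∧ ¬ lexEq v B1 B2

/-- `(M, v)` is a chore instance for the universal ordering given by the linear order on `C`:
all costs are nonnegative and non-increasing along the ordering. -/
def ChoreOrdered (M : Finset C) (v : C → ℝ) : Prop :=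
  (∀ c ∈ M, 0 ≤ v c) ∧ ∀ c ∈ M, ∀ c' ∈ M, c ≤ c' → v c' ≤ v c

/-- `P` is a partition of `M` into `n` (possibly empty) bundles. -/
def IsPartition (M : Finset C) {n : ℕ} (P : Fin n → Finset C) : Prop :=
  (∀ i, P i ⊆ M) ∧ (∀ i j, i ≠ j → Disjoint (P i) (P j)) ∧ ∀ c ∈ M, ∃ i, c ∈ P i

/-- The maximin share: the minimum over partitions of `M` into `n` bundles of the
maximum bundle cost. -/
def MMS (M : Finset C) (v : C → ℝ) (n : ℕ) : ℝ :=
  sInf {x : ℝ | ∃ P : Fin n → Finset C, IsPartition M P ∧ ∀ i, bundleCost v (P i) ≤ x}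

/-- One pass of first-fit: scan the chores in the given list order, adding a chore whenever
the bundle cost stays at most `τ`. -/
def ffdFill (v : C → ℝ) (τ : ℝ) : List C → Finset C → Finset C
  | [], B => B
  | c :: rest, B =>
      if bundleCost v (insert c B) ≤ τ then ffdFill v τ rest (insert c B)
      else ffdFill v τ rest B

/-- The bundle FFD builds from the remaining chores `R` (scanned from largest to smallest,
i.e. along the linear order on `C`). -/
def ffdBundle (v : C → ℝ) (τ : ℝ) (R : Finset C) : Finset C :=
  ffdFill v τ (R.sort (· ≤ ·)) ∅

/-- The chores remaining after FFD has filled `k` bundles. -/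
def ffdRem (M : Finset C) (v : C → ℝ) (τ : ℝ) : ℕ → Finset C
  | 0 => M
  | k + 1 => ffdRem M v τ k \ ffdBundle v τ (ffdRem M v τ k)

/-- The `(k+1)`-st bundle (0-indexed `k`) output by FFD. -/
def FFDBundle (M : Finset C) (v : C → ℝ) (τ : ℝ) (k : ℕ) : Finset C :=
  ffdBundle v τ (ffdRem M v τ k)

/-- `FFD(M, v, τ, n)` allocates all chores. -/
def FFDAllocatesAll (M : Finset C) (v : C → ℝ) (τ : ℝ) (n : ℕ) : Prop :=
  ffdRem M v τ n = ∅

/-- The union `A_1 ∪ ⋯ ∪ A_{k-1}` of the bundles preceding the `k`-th one (0-indexed). -/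
def priorUnion {n : ℕ} (A : Fin n → Finset C) (k : Fin n) : Finset C :=
  (Finset.univ.filter fun j : Fin n => j < k).biUnion A

/-- `B` is a `k`-th benchmark bundle of the collection `A`: a lexicographically maximal
subset of `M \ (A_1 ∪ ⋯ ∪ A_{k-1})` among subsets of cost at most `τ`. -/
def IsBenchmark (M : Finset C) (v : C → ℝ) (τ : ℝ) {n : ℕ}
    (A : Fin n → Finset C) (k : Fin n) (B : Finset C) : Prop :=
  B ⊆ M \ priorUnion A k ∧ bundleCost v B ≤ τ ∧
    ∀ B' ⊆ M \ priorUnion A k, bundleCost v B' ≤ τ → lexLe v B' B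

/-- The tuple `(M, A, v, τ)` is First Fit Valid: `A` consists of pairwise disjoint bundles
in `M`, `τ ≥ MMS(M, v, n)`, and each `A_k` is lexicographically at least the `k`-th
benchmark bundle. -/
def FirstFitValid (M : Finset C) {n : ℕ} (A : Fin n → Finset C) (v : C → ℝ) (τ : ℝ) : Prop :=
  (∀ k, A k ⊆ M) ∧ (∀ i j, i ≠ j → Disjoint (A i) (A j)) ∧ MMS M v n ≤ τ ∧
    ∀ (k : Fin n) (B : Finset C), IsBenchmark M v τ A k B → lexLe v B (A k)

/-- `c` is the last chore `B[|B|]` of the bundle `B`. -/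
def IsLastChore (B : Finset C) (c : C) : Prop := c ∈ B ∧ ∀ c' ∈ B, c' ≤ c

/-- The fit-in space `fs` of a bundle: `τ` minus the cost of the bundle without its
last chore. -/
def fitSpace (v : C → ℝ) (τ : ℝ) (B : Finset C) : ℝ :=
  if h : B.Nonempty then τ - bundleCost v (B.erase (B.max' h)) else τ

/-- The chore `c = B[p]` of `B` is `x`-redundant: the cost of `{B[1], …, B[p-1]}`
is at least `x`. -/
def Redundant (v : C → ℝ) (x : ℝ) (B : Finset C) (c : C) : Prop :=
  c ∈ B ∧ x ≤ bundleCost v (B.filter fun c' => c' < c)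

/-- `A` dominates `B`: there is `f : B → A` with `v(f⁻¹(c')) ≤ v(c')` for every `c' ∈ A`. -/
def Dominates (v : C → ℝ) (A B : Finset C) : Prop :=
  ∃ f : C → C, (∀ c ∈ B, f c ∈ A) ∧
    ∀ c' ∈ A, bundleCost v (B.filter fun c => f c = c') ≤ v c'

/-- `cnew` is a suitable reduced chore for `cstar` (the excessive chore of `A_k`):
`v(cnew) < v(cstar)` and, running FFD on `M' = (M \ {cstar}) ∪ {cnew}`, the union of the
first `k` output bundles equals `((A_1 ∪ ⋯ ∪ A_k) \ {cstar}) ∪ {cnew}`. -/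
def SuitableReduced (M : Finset C) (v : C → ℝ) (τ : ℝ) {n : ℕ}
    (A : Fin n → Finset C) (k : Fin n) (cstar cnew : C) : Prop :=
  v cnew < v cstar ∧
    (Finset.univ.filter fun j : Fin n => j ≤ k).biUnion
        (fun j => FFDBundle (insert cnew (M.erase cstar)) v τ j.val) =
      insert cnew (((Finset.univ.filter fun j : Fin n => j ≤ k).biUnion A).erase cstar)

/-- The Tidy-Up conditions on the tuple `(M, A, v, τ)`. -/
def TidyUp (M : Finset C) {n : ℕ} (A : Fin n → Finset C) (v : C → ℝ) (τ : ℝ) : Prop :=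
  FirstFitValid M A v τ ∧
  (∃ cstar, M \ Finset.univ.biUnion A = {cstar} ∧ ∀ c ∈ M, v cstar ≤ v c) ∧
  (∀ k, ∀ c ∈ A k, ¬ Redundant v (MMS M v n) (A k) c) ∧
  (∀ c ∈ M, τ - MMS M v n < v c) ∧
  (∀ k, 2 ≤ (A k).card ∧ nthCost v (A k) 1 + nthCost v (A k) 2 < MMS M v n) ∧
  (∃ P : Fin n → Finset C, IsPartition M P ∧
    (∀ j, bundleCost v (P j) ≤ MMS M v n ∧ 3 ≤ (P j).card) ∧
    ∀ k j, ¬ Dominates v (A k) (P j))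

/-- One pass of HFFD's first-fit with remaining agents `T`: a chore is added iff some
remaining agent accepts the enlarged bundle. -/
def hffdFill {n : ℕ} (v : Fin n → C → ℝ) (h : Fin n → ℝ) (T : Finset (Fin n)) :
    List C → Finset C → Finset C
  | [], B => B
  | c :: rest, B =>
      if ∃ i ∈ T, bundleCost (v i) (insert c B) ≤ h i then
        hffdFill v h T rest (insert c B)
      else hffdFill v h T rest B

/-- `(A, assign)` is a run of HFFD on the instance `(M, v)` with thresholds `h`:
bundle `A_k` is built by first-fit over the remaining chores using the remaining agents,
and is assigned to the remaining agent `assign k`, who accepts it. -/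
def IsHFFDRun {n : ℕ} (M : Finset C) (v : Fin n → C → ℝ) (h : Fin n → ℝ)
    (A : Fin n → Finset C) (assign : Fin n → Fin n) : Prop :=
  Function.Injective assign ∧
    ∀ k : Fin n,
      A k = hffdFill v h
          (Finset.univ \ (Finset.univ.filter fun j : Fin n => j < k).image assign)
          ((M \ priorUnion A k).sort (· ≤ ·)) ∅ ∧
      bundleCost (v (assign k)) (A k) ≤ h (assign k)


/-!
FFD fills a bundle greedily, scanning the remaining chores from the largest down. Comparing
zero-padded cost sequences lexicographically, induction along the scan shows that this greedy
bundle is at least every subset of the remaining chores of cost at most `τ`: if the current chore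
`c` fits, a competitor either starts with a strictly cheaper chore or with one of the same cost,
and then the comparison passes to the tails with threshold `τ - v c`; if `c` does not fit, no
competitor contains it. The FFD bundle is itself such a subset, so it and the benchmark bundle
are lexicographically below each other, hence equal.
-/

/-- `nthCost v B` re-indexed from `0` (`nthCost v B (p + 1) = costSeq v B p`), so that `lexLe`
becomes the order of `Lex (ℕ → ℝ)`. -/
def costSeq (v : C → ℝ) (B : Finset C) : ℕ → ℝ :=
  fun i => ((B.sort).map v).getD i 0

section LexSeq

variable {α : Type*} [PartialOrder α] {f g : ℕ → α}

theorem toLex_lt_of_apply_zero_lt (h : f 0 < g 0) : toLex f < toLex g :=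
  ⟨0, fun _ hj => absurd hj (Nat.not_lt_zero _), h⟩

theorem toLex_le_of_apply_zero_eq_of_tail_le (h₀ : f 0 = g 0)
    (h : toLex (fun i => f (i + 1)) ≤ toLex (fun i => g (i + 1))) : toLex f ≤ toLex g := by
  rcases h.lt_or_eq with ⟨i, hi, hlt⟩ | heq
  · refine le_of_lt ⟨i + 1, fun j hj => ?_, hlt⟩
    cases j with
    | zero => exact h₀
    | succ j => exact hi j (by omega)
  · refine le_of_eq (congrArg toLex (funext fun i => ?_))
    cases i with
    | zero => exact h₀
    | succ i => exact congrFun heq i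

end LexSeq

section CostSeq

variable {v : C → ℝ}

theorem lexEq_iff_costSeq_eq {B₁ B₂ : Finset C} : lexEq v B₁ B₂ ↔ costSeq v B₁ = costSeq v B₂ :=
  ⟨fun h => funext fun i => h (i + 1), fun h p => congrFun h (p - 1)⟩

theorem toLex_costSeq_le_of_lexLe {B₁ B₂ : Finset C} (h : lexLe v B₁ B₂) :
    toLex (costSeq v B₁) ≤ toLex (costSeq v B₂) := by
  rcases h with h | ⟨q, hlt, heq⟩
  · exact le_of_eq (congrArg toLex (lexEq_iff_costSeq_eq.1 h))
  · refine le_of_lt ⟨q - 1, fun j hj => ?_, hlt⟩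
    exact heq (j + 1) (by omega)

@[simp]
theorem costSeq_empty : costSeq v ∅ = 0 := by
  funext i
  simp [costSeq]

theorem toLex_costSeq_empty_le {B : Finset C} (h : ∀ c ∈ B, 0 ≤ v c) :
    toLex (costSeq v ∅) ≤ toLex (costSeq v B) := by
  rw [costSeq_empty]
  refine Pi.toLex_monotone fun i => ?_
  rw [Pi.zero_apply, costSeq, List.getD_eq_getElem?_getD, List.getElem?_map]
  cases hi : (B.sort)[i]? with
  | none => exact le_rfl
  | some c => exact h c ((Finset.mem_sort _).1 (List.mem_of_getElem? hi))

variable {B : Finset C} {c : C}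

theorem Finset.sort_insert_of_forall_lt (h : ∀ b ∈ B, c < b) : (insert c B).sort = c :: B.sort :=
  Finset.sort_insert _ (fun b hb => (h b hb).le) fun hc => lt_irrefl c (h c hc)

theorem costSeq_insert_zero (h : ∀ b ∈ B, c < b) : costSeq v (insert c B) 0 = v c := by
  simp [costSeq, Finset.sort_insert_of_forall_lt h]

theorem costSeq_insert_succ (h : ∀ b ∈ B, c < b) (i : ℕ) :
    costSeq v (insert c B) (i + 1) = costSeq v B i := by
  simp [costSeq, Finset.sort_insert_of_forall_lt h]

theorem toLex_costSeq_le_insert_of_min {B D : Finset C} {b c : C} (hD : ∀ x ∈ D, c < x)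
    (hbB : b ∈ B) (hb : ∀ x ∈ B, b ≤ x) (hvb : v b ≤ v c)
    (htail : v b = v c → toLex (costSeq v (B.erase b)) ≤ toLex (costSeq v D)) :
    toLex (costSeq v B) ≤ toLex (costSeq v (insert c D)) := by
  have hb' : ∀ x ∈ B.erase b, b < x := fun x hx =>
    (hb x (Finset.mem_of_mem_erase hx)).lt_of_ne (Finset.ne_of_mem_erase hx).symm
  rw [← Finset.insert_erase hbB]
  rcases hvb.lt_or_eq with hlt | heq
  · refine (toLex_lt_of_apply_zero_lt ?_).le
    rwa [costSeq_insert_zero hb', costSeq_insert_zero hD]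
  · refine toLex_le_of_apply_zero_eq_of_tail_le
      (by rw [costSeq_insert_zero hb', costSeq_insert_zero hD, heq]) ?_
    simpa only [costSeq_insert_succ hb', costSeq_insert_succ hD] using htail heq

end CostSeq

section FirstFit

variable {v : C → ℝ}

theorem bundleCost_insert {B : Finset C} {c : C} (hc : c ∉ B) :
    bundleCost v (insert c B) = v c + bundleCost v B :=
  Finset.sum_insert hc

theorem ffdFill_cost_le {τ : ℝ} (L : List C) {acc : Finset C} (h : bundleCost v acc ≤ τ) :
    bundleCost v (ffdFill v τ L acc) ≤ τ := by
  induction L generalizing acc with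
  | nil => exact h
  | cons c rest ih =>
    rw [ffdFill]
    split_ifs with hfit
    exacts [ih hfit, ih h]

theorem ffdFill_subset (τ : ℝ) (L : List C) (acc : Finset C) :
    ffdFill v τ L acc ⊆ acc ∪ L.toFinset := by
  induction L generalizing acc with
  | nil => simp [ffdFill]
  | cons c rest ih =>
    rw [ffdFill]
    split_ifs
    · exact (ih _).trans (by intro x; simp)
    · exact (ih _).trans (by intro x; simp +contextual)

theorem ffdFill_insert (τ : ℝ) {L : List C} {acc : Finset C} {c : C} (hcL : c ∉ L)
    (hcacc : c ∉ acc) : ffdFill v τ L (insert c acc) = insert c (ffdFill v (τ - v c) L acc) := by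
  induction L generalizing acc with
  | nil => rfl
  | cons c' rest ih =>
    obtain ⟨hne, hcrest⟩ : c ≠ c' ∧ c ∉ rest := by simpa using hcL
    have hcost : bundleCost v (insert c' (insert c acc)) = v c + bundleCost v (insert c' acc) := by
      rw [Finset.insert_comm, bundleCost_insert (by simp [hne, hcacc])]
    rw [ffdFill, ffdFill, hcost]
    by_cases hfit : bundleCost v (insert c' acc) ≤ τ - v c
    · rw [if_pos (by linarith), if_pos hfit, Finset.insert_comm c' c,
        ih hcrest (by simp [hne, hcacc])]
    · rw [if_neg (by linarith), if_neg hfit, ih hcrest hcacc]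

theorem toLex_costSeq_le_ffdFill {S : Set C} (hnn : ∀ c ∈ S, 0 ≤ v c) (hv : AntitoneOn v S)
    {L : List C} (hL : L.Pairwise (· < ·)) (hLS : ∀ c ∈ L, c ∈ S) {τ : ℝ} {B : Finset C}
    (hB : ∀ b ∈ B, b ∈ L) (hcost : bundleCost v B ≤ τ) :
    toLex (costSeq v B) ≤ toLex (costSeq v (ffdFill v τ L ∅)) := by
  induction L generalizing τ B with
  | nil =>
    obtain rfl : B = ∅ := Finset.eq_empty_of_forall_notMem fun b hb => by simpa using hB b hb
    exact le_rfl
  | cons c rest ih =>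
    rcases B.eq_empty_or_nonempty with rfl | hBne
    · exact toLex_costSeq_empty_le fun x hx =>
        hnn x (hLS x (by simpa using ffdFill_subset τ (c :: rest) ∅ hx))
    obtain ⟨hc_lt, hrest⟩ := List.pairwise_cons.1 hL
    have hrestS : ∀ x ∈ rest, x ∈ S := fun x hx => hLS x (List.mem_cons_of_mem c hx)
    have hsingle : bundleCost v (insert c ∅) = v c := by simp [bundleCost]
    rw [ffdFill, hsingle]
    split_ifs with hfit
    · obtain ⟨b, hbB, hbmin⟩ : ∃ b ∈ B, ∀ x ∈ B, b ≤ x :=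
        ⟨B.min' hBne, B.min'_mem hBne, fun x hx => B.min'_le x hx⟩
      have hcb : c ≤ b := by
        rcases List.mem_cons.1 (hB b hbB) with rfl | hb_rest
        exacts [le_rfl, (hc_lt b hb_rest).le]
      rw [ffdFill_insert τ (fun hc => lt_irrefl c (hc_lt c hc)) (Finset.notMem_empty c)]
      refine toLex_costSeq_le_insert_of_min
        (fun x hx => hc_lt x (by simpa using ffdFill_subset (τ - v c) rest ∅ hx)) hbB hbmin
        (hv (hLS c List.mem_cons_self) (hLS b (hB b hbB)) hcb) fun heq => ?_
      refine ih hrest hrestS (fun x hx => ?_) ?_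
      · exact (List.mem_cons.1 (hB x (Finset.mem_of_mem_erase hx))).resolve_left
          (hcb.trans_lt ((hbmin x (Finset.mem_of_mem_erase hx)).lt_of_ne
            (Finset.ne_of_mem_erase hx).symm)).ne'
      · rw [bundleCost, ← Finset.add_sum_erase B v hbB, heq] at hcost
        unfold bundleCost
        linarith
    · have hcB : c ∉ B := fun hc =>
        hfit ((Finset.single_le_sum (fun x hx => hnn x (hLS x (hB x hx))) hc).trans hcost)
      exact ih hrest hrestS
        (fun b hb => by simpa [show b ≠ c by rintro rfl; exact hcB hb] using hB b hb) hcost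

end FirstFit

section FFD

variable {M : Finset C} {v : C → ℝ} {τ : ℝ}

theorem ffdBundle_subset (R : Finset C) : ffdBundle v τ R ⊆ R := fun x hx => by
  have hx := ffdFill_subset (v := v) τ R.sort ∅ hx
  rw [Finset.empty_union, List.mem_toFinset] at hx
  exact (Finset.mem_sort _).1 hx

theorem bundleCost_ffdBundle_le (hτ : 0 ≤ τ) (R : Finset C) :
    bundleCost v (ffdBundle v τ R) ≤ τ :=
  ffdFill_cost_le _ (by simpa [bundleCost] using hτ)

theorem toLex_costSeq_le_ffdBundle (hv : ChoreOrdered M v) {R B : Finset C} (hR : R ⊆ M)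
    (hB : B ⊆ R) (hcost : bundleCost v B ≤ τ) :
    toLex (costSeq v B) ≤ toLex (costSeq v (ffdBundle v τ R)) :=
  toLex_costSeq_le_ffdFill (S := M) hv.1 (fun a ha b hb => hv.2 a ha b hb)
    R.sortedLT_sort.pairwise (fun _ hc => hR ((Finset.mem_sort _).1 hc))
    (fun _ hb => (Finset.mem_sort _).2 (hB hb)) hcost

theorem ffdRem_subset (k : ℕ) : ffdRem M v τ k ⊆ M := by
  induction k with
  | zero => exact subset_rfl
  | succ k ih => exact Finset.sdiff_subset.trans ih

theorem ffdRem_eq_sdiff_biUnion (k : ℕ) :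
    ffdRem M v τ k = M \ (Finset.range k).biUnion (FFDBundle M v τ) := by
  induction k with
  | zero => simp [ffdRem]
  | succ k ih =>
    rw [ffdRem, ← FFDBundle, ih, sdiff_sdiff_left, Finset.sup_eq_union, Finset.range_add_one,
      Finset.biUnion_insert, Finset.union_comm]

theorem sdiff_priorUnion_FFDBundle {n : ℕ} (k : Fin n) :
    M \ priorUnion (fun j : Fin n => FFDBundle M v τ j) k = ffdRem M v τ k := by
  rw [ffdRem_eq_sdiff_biUnion]
  congr 1
  ext x
  simp only [priorUnion, Finset.mem_biUnion, Finset.mem_filter, Finset.mem_univ, true_and,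
    Finset.mem_range]
  exact ⟨fun ⟨j, hj, hx⟩ => ⟨j, hj, hx⟩, fun ⟨m, hm, hx⟩ => ⟨⟨m, hm.trans k.isLt⟩, hm, hx⟩⟩

end FFD

theorem ffd_bundles_lexEq_benchmarks_general (M : Finset C) (v : C → ℝ) (τ : ℝ) (n : ℕ)
    (hv : ChoreOrdered M v) (hτ : 0 ≤ τ) :
    ∀ (k : Fin n) (B : Finset C),
      IsBenchmark M v τ (fun j : Fin n => FFDBundle M v τ j.val) k B →
      lexEq v (FFDBundle M v τ k.val) B := by
  rintro k B ⟨hB, hBcost, hBmax⟩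
  rw [sdiff_priorUnion_FFDBundle] at hB hBmax
  have hD := ffdBundle_subset (v := v) (τ := τ) (ffdRem M v τ k)
  rw [lexEq_iff_costSeq_eq]
  exact toLex.injective <| le_antisymm
    (toLex_costSeq_le_of_lexLe (hBmax _ hD (bundleCost_ffdBundle_le hτ _)))
    (toLex_costSeq_le_ffdBundle hv (ffdRem_subset k) hB hBcost)

/-- every bundle output by `FFD(M, v, τ, n)` is lexicographically equal to the
corresponding benchmark bundle of the FFD output collection. -/
theorem ffd_bundles_lexEq_benchmarks (M : Finset C) (v : C → ℝ) (τ : ℝ) (n : ℕ)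
    (hv : ChoreOrdered M v) (hτ : 0 ≤ τ) (hn : 1 ≤ n) :
    ∀ (k : Fin n) (B : Finset C),
      IsBenchmark M v τ (fun j : Fin n => FFDBundle M v τ j.val) k B →
      lexEq v (FFDBundle M v τ k.val) B :=
  ffd_bundles_lexEq_benchmarks_general M v τ n hv hτ

end
end

section
/- Let (M, A, v, τ) be a First Fit Valid tuple with n bundles and let c' ∈ M \ (A_1 ∪ ... ∪ A_n) be an unallocated chore. Then (M \ {c'}, A, v, τ) is First Fit Valid. -/
open scoped Classical

noncomputable section

variable {C : Type*} [LinearOrder C]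

/- Auxiliary lemmas -/

lemma lexLe_refl (v : C → ℝ) (B : Finset C) : lexLe v B B := Or.inl (fun _ => rfl)

lemma lexLe_total (v : C → ℝ) (B1 B2 : Finset C) : lexLe v B1 B2 ∨ lexLe v B2 B1 := by
  by_cases h : lexEq v B1 B2
  · exact Or.inl (Or.inl h)
  · simp only [lexEq, not_forall] at h
    have hq := Nat.find_spec h
    have hmin : ∀ p < Nat.find h, nthCost v B1 p = nthCost v B2 p :=
      fun p hp => not_not.1 (Nat.find_min h hp)
    rcases lt_or_gt_of_ne hq with hlt | hgt
    · exact Or.inl (Or.inr ⟨Nat.find h, hlt, hmin⟩)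
    · exact Or.inr (Or.inr ⟨Nat.find h, hgt, fun p hp => (hmin p hp).symm⟩)

lemma lexLe_trans (v : C → ℝ) {B1 B2 B3 : Finset C}
    (h12 : lexLe v B1 B2) (h23 : lexLe v B2 B3) : lexLe v B1 B3 := by
  rcases h12 with h12 | ⟨q1, hq1, hlt1⟩
  · rcases h23 with h23 | ⟨q2, hq2, hlt2⟩
    · exact Or.inl (fun p => (h12 p).trans (h23 p))
    · exact Or.inr ⟨q2, by rw [h12 q2]; exact hq2, fun p hp => (h12 p).trans (hlt2 p hp)⟩
  · rcases h23 with h23 | ⟨q2, hq2, hlt2⟩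
    · exact Or.inr ⟨q1, by rw [← h23 q1]; exact hq1, fun p hp => (hlt1 p hp).trans (h23 p)⟩
    · rcases lt_trichotomy q1 q2 with h | h | h
      · exact Or.inr ⟨q1, by rw [← hlt2 q1 h]; exact hq1,
          fun p hp => (hlt1 p hp).trans (hlt2 p (hp.trans h))⟩
      · subst h
        exact Or.inr ⟨q1, hq1.trans hq2, fun p hp => (hlt1 p hp).trans (hlt2 p hp)⟩
      · exact Or.inr ⟨q2, by rw [hlt1 q2 h]; exact hq2,
          fun p hp => (hlt1 p (hp.trans h)).trans (hlt2 p hp)⟩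

lemma exists_lex_max (v : C → ℝ) (s : Finset (Finset C)) (hs : s.Nonempty) :
    ∃ b ∈ s, ∀ a ∈ s, lexLe v a b := by
  induction s using Finset.induction_on with
  | empty => exact absurd hs (by simp)
  | @insert x s' hx ih =>
    rcases s'.eq_empty_or_nonempty with rfl | hs'
    · exact ⟨x, by simp, by simp [lexLe_refl]⟩
    · obtain ⟨b, hb, hmax⟩ := ih hs'
      rcases lexLe_total v x b with h | h
      · refine ⟨b, Finset.mem_insert_of_mem hb, fun a ha => ?_⟩
        rcases Finset.mem_insert.1 ha with rfl | ha
        · exact h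
        · exact hmax a ha
      · refine ⟨x, Finset.mem_insert_self _ _, fun a ha => ?_⟩
        rcases Finset.mem_insert.1 ha with rfl | ha
        · exact lexLe_refl v a
        · exact lexLe_trans v (hmax a ha) h

lemma bundleCost_nonneg {M : Finset C} {v : C → ℝ} (hv : ∀ c ∈ M, 0 ≤ v c)
    {B : Finset C} (hB : B ⊆ M) : 0 ≤ bundleCost v B :=
  Finset.sum_nonneg fun c hc => hv c (hB hc)

lemma MMS_nonneg {M : Finset C} {v : C → ℝ} (hv : ∀ c ∈ M, 0 ≤ v c) (hM : M.Nonempty)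
    (n : ℕ) : 0 ≤ MMS M v n := by
  apply Real.sInf_nonneg
  rintro x ⟨P, hP, hx⟩
  rcases Nat.eq_zero_or_pos n with rfl | hn
  · obtain ⟨c, hc⟩ := hM
    obtain ⟨i, _⟩ := hP.2.2 c hc
    exact i.elim0
  · exact le_trans (bundleCost_nonneg hv (hP.1 ⟨0, hn⟩)) (hx ⟨0, hn⟩)

lemma IsPartition.erase_chore {M : Finset C} {n : ℕ} {P : Fin n → Finset C}
    (hP : IsPartition M P) (c' : C) :
    IsPartition (M.erase c') (fun i => (P i).erase c') := by
  refine ⟨fun i => Finset.erase_subset_erase _ (hP.1 i),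
          fun i j hij => Finset.disjoint_of_subset_left (Finset.erase_subset _ _)
            (Finset.disjoint_of_subset_right (Finset.erase_subset _ _) (hP.2.1 i j hij)),
          fun c hc => ?_⟩
  obtain ⟨i, hi⟩ := hP.2.2 c (Finset.mem_of_mem_erase hc)
  exact ⟨i, Finset.mem_erase.2 ⟨(Finset.mem_erase.1 hc).1, hi⟩⟩

lemma bundleCost_erase_le {M : Finset C} {v : C → ℝ} (hv : ∀ c ∈ M, 0 ≤ v c)
    {B : Finset C} (hB : B ⊆ M) (c' : C) :
    bundleCost v (B.erase c') ≤ bundleCost v B :=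
  Finset.sum_le_sum_of_subset_of_nonneg (Finset.erase_subset _ _)
    (fun c hc _ => hv c (hB hc))

lemma MMS_erase_le {M : Finset C} {v : C → ℝ} (hv : ∀ c ∈ M, 0 ≤ v c)
    {c' : C} (hc : c' ∈ M) (n : ℕ) : MMS (M.erase c') v n ≤ MMS M v n := by
  rcases Nat.eq_zero_or_pos n with rfl | hn
  · -- n = 0 : both MMS values are 0
    have hM0 : MMS M v 0 = 0 := by
      have : {x : ℝ | ∃ P : Fin 0 → Finset C, IsPartition M P ∧
          ∀ i, bundleCost v (P i) ≤ x} = ∅ := by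
        ext x
        simp only [Set.mem_setOf_eq, Set.mem_empty_iff_false, iff_false, not_exists]
        rintro P ⟨⟨-, -, hcov⟩, -⟩
        obtain ⟨i, -⟩ := hcov c' hc
        exact i.elim0
      rw [MMS, this, Real.sInf_empty]
    rw [hM0]
    rcases (M.erase c').eq_empty_or_nonempty with he | ⟨c, hcmem⟩
    · rw [MMS, he]
      have huniv : {x : ℝ | ∃ P : Fin 0 → Finset C, IsPartition (∅ : Finset C) P ∧
          ∀ i, bundleCost v (P i) ≤ x} = Set.univ := by
        ext x
        simp only [Set.mem_setOf_eq, Set.mem_univ, iff_true]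
        exact ⟨fun i => i.elim0, ⟨fun i => i.elim0, fun i => i.elim0, fun c hc => absurd hc (by simp)⟩,
          fun i => i.elim0⟩
      rw [huniv]
      rw [Real.sInf_of_not_bddBelow]
      rintro ⟨b, hb⟩
      have := hb (Set.mem_univ (b - 1))
      linarith
    · have : {x : ℝ | ∃ P : Fin 0 → Finset C, IsPartition (M.erase c') P ∧
          ∀ i, bundleCost v (P i) ≤ x} = ∅ := by
        ext x
        simp only [Set.mem_setOf_eq, Set.mem_empty_iff_false, iff_false, not_exists]
        rintro P ⟨⟨-, -, hcov⟩, -⟩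
        obtain ⟨i, -⟩ := hcov c hcmem
        exact i.elim0
      rw [MMS, this, Real.sInf_empty]
  · -- n ≥ 1
    apply csInf_le_csInf
    · -- the erased set is bounded below by 0
      refine ⟨0, ?_⟩
      rintro x ⟨P, hP, hx⟩
      exact le_trans (bundleCost_nonneg (fun c hcm => hv c (Finset.mem_of_mem_erase hcm))
        (hP.1 ⟨0, hn⟩)) (hx ⟨0, hn⟩)
    · -- the original set is nonempty
      refine ⟨bundleCost v M, fun i => if i = ⟨0, hn⟩ then M else ∅, ?_, ?_⟩
      · refine ⟨fun i => ?_, fun i j hij => ?_, fun c hcm => ⟨⟨0, hn⟩, by simp [hcm]⟩⟩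
        · by_cases h : i = ⟨0, hn⟩ <;> simp [h]
        · by_cases h : i = ⟨0, hn⟩ <;> by_cases h' : j = ⟨0, hn⟩ <;>
            simp_all
      · intro i
        by_cases h : i = ⟨0, hn⟩
        · simp [h]
        · simpa [h, bundleCost] using Finset.sum_nonneg (fun c hc => hv c hc)
    · -- inclusion
      rintro x ⟨P, hP, hx⟩
      refine ⟨fun i => (P i).erase c', hP.erase_chore c', fun i => ?_⟩
      exact le_trans (bundleCost_erase_le hv (hP.1 i) c') (hx i)

/-- removing an unallocated chore from a First Fit Valid tuple keeps it
First Fit Valid. -/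
theorem remove_unallocated_first_fit_valid {n : ℕ}
    (M : Finset C) (A : Fin n → Finset C) (v : C → ℝ) (τ : ℝ)
    (hv : ChoreOrdered M v) (hFFV : FirstFitValid M A v τ)
    (c' : C) (hc1 : c' ∈ M) (hc2 : c' ∉ Finset.univ.biUnion A) :
    FirstFitValid (M.erase c') A v τ := by
  obtain ⟨hsub, hdisj, hmms, hbench⟩ := hFFV
  have hcA : ∀ k, c' ∉ A k := by
    intro k hk
    exact hc2 (Finset.mem_biUnion.2 ⟨k, Finset.mem_univ k, hk⟩)
  refine ⟨fun k x hx => Finset.mem_erase.2 ⟨fun h => hcA k (h ▸ hx), hsub k hx⟩,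
    hdisj, le_trans (MMS_erase_le hv.1 hc1 n) hmms, ?_⟩
  intro k B hB
  obtain ⟨hB1, hB2, -⟩ := hB
  have hτ : 0 ≤ τ := le_trans (MMS_nonneg hv.1 ⟨c', hc1⟩ n) hmms
  -- the collection of candidate bundles w.r.t. the full set M
  set s : Finset (Finset C) :=
    (M \ priorUnion A k).powerset.filter (fun B' => bundleCost v B' ≤ τ) with hs
  have hne : s.Nonempty := by
    refine ⟨∅, Finset.mem_filter.2 ⟨Finset.mem_powerset.2 (Finset.empty_subset _), ?_⟩⟩
    simpa [bundleCost] using hτ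
  obtain ⟨Bmax, hBmax, hmax⟩ := exists_lex_max v s hne
  have hmem : ∀ B' ∈ s, B' ⊆ M \ priorUnion A k ∧ bundleCost v B' ≤ τ := by
    intro B' hB'
    obtain ⟨h1, h2⟩ := Finset.mem_filter.1 hB'
    exact ⟨Finset.mem_powerset.1 h1, h2⟩
  have hBench : IsBenchmark M v τ A k Bmax := by
    refine ⟨(hmem Bmax hBmax).1, (hmem Bmax hBmax).2, fun B' hB'sub hB'cost => ?_⟩
    exact hmax B' (Finset.mem_filter.2 ⟨Finset.mem_powerset.2 hB'sub, hB'cost⟩)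
  have hBs : B ∈ s := by
    refine Finset.mem_filter.2 ⟨Finset.mem_powerset.2 ?_, hB2⟩
    exact hB1.trans (Finset.sdiff_subset_sdiff (Finset.erase_subset _ _) le_rfl)
  exact lexLe_trans v (hmax B hBs) (hbench k Bmax hBench)

end
end

section
/- Let (M, A, v, τ) be a First Fit Valid tuple with n bundles, let γ ≥ 0, and let B_k denote the k-th benchmark bundle of A. Then for every k ∈ {1, ..., n}: (a) A_k[≥γ] ≥lex B_k[≥γ]; and (b) if A_k[≥γ] >lex B_k[≥γ], then v(A_k[≥γ]) > τ. -/
open scoped Classical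

noncomputable section

variable {C : Type*} [LinearOrder C]

/-!
Truncation at `γ` keeps a prefix of the non-increasing cost sequence of a bundle. So at the
first position where `B_k` and `A_k` differ, either `A_k` survives the truncation and stays
strictly larger, or both costs are below `γ`, and then everything from there on is cut off from
both bundles; this gives (a). For (b): if `v(A_k[≥γ]) ≤ τ`, then `A_k[≥γ]` competes with the
`k`-th benchmark, so `A_k[≥γ] ≤lex B_k`, and truncating once more gives
`A_k[≥γ] ≤lex B_k[≥γ]`.
-/

namespace List

variable {α : Type*}

lemma getD_mem_or_eq_default (l : List α) (d : α) (i : ℕ) :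
    l.getD i d ∈ l ∨ l.getD i d = d := by
  rcases lt_or_ge i l.length with hi | hi
  · exact Or.inl (getD_eq_getElem _ _ hi ▸ getElem_mem hi)
  · exact Or.inr (getD_eq_default _ _ hi)

lemma getD_antitone_of_pairwise_ge [Preorder α] {l : List α} {d : α}
    (hl : l.Pairwise (· ≥ ·)) (hd : ∀ x ∈ l, d ≤ x) {i j : ℕ} (hij : i ≤ j) : l.getD j d ≤ l.getD i d := by
  rcases lt_or_ge j l.length with hj | hj
  · rw [getD_eq_getElem _ _ hj, getD_eq_getElem _ _ (hij.trans_lt hj)]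
    exact hl.rel_get_of_le (a := ⟨i, hij.trans_lt hj⟩) (b := ⟨j, hj⟩) hij
  · rw [getD_eq_default _ _ hj]
    rcases getD_mem_or_eq_default l d i with h | h
    · exact hd _ h
    · exact h.ge

lemma getD_filter_le_of_pairwise_ge [LinearOrder α] {l : List α} (hl : l.Pairwise (· ≥ ·))
    (γ d : α) (i : ℕ) :
    (l.filter (γ ≤ ·)).getD i d = if γ ≤ l.getD i d then l.getD i d else d := by
  induction l generalizing i with
  | nil => simp
  | cons a t ih =>
    rw [pairwise_cons] at hl
    by_cases ha : γ ≤ a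
    · rw [filter_cons_of_pos (by simpa using ha)]
      cases i with
      | zero => simp [ha]
      | succ i => simpa using ih hl.2 i
    · have hfilter : t.filter (γ ≤ ·) = [] :=
        filter_eq_nil_iff.mpr fun x hx => by simpa using (hl.1 x hx).trans_lt (not_le.mp ha)
      rw [filter_cons_of_neg (by simpa using ha), hfilter, getD_nil]
      rcases getD_mem_or_eq_default (a :: t) d i with h | h
      · rw [if_neg]
        rintro hγ
        rcases mem_cons.mp h with h | h
        · exact ha (h ▸ hγ)
        · exact ha (hγ.trans (hl.1 _ h))
      · rw [h, ite_self]

end List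

lemma Finset.sort_filter {α : Type*} [LinearOrder α] (s : Finset α) (p : α → Prop)
    [DecidablePred p] :
    (s.filter p).sort (· ≤ ·) = (s.sort (· ≤ ·)).filter (fun a => decide (p a)) := by
  refine List.Perm.eq_of_pairwise' (r := (· ≤ ·)) (Finset.pairwise_sort _ _)
    ((Finset.pairwise_sort s _).filter _) ?_
  rw [← Multiset.coe_eq_coe, Finset.sort, Multiset.sort_eq, Finset.filter_val,
    ← Multiset.filter_coe, Finset.sort, Multiset.sort_eq]

section ChoreOrdered

variable {M : Finset C} {v : C → ℝ}

lemma ChoreOrdered.pairwise_costs (hv : ChoreOrdered M v) {B : Finset C} (hB : B ⊆ M) :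
    ((B.sort (· ≤ ·)).map v).Pairwise (· ≥ ·) := by
  rw [List.pairwise_map]
  exact (Finset.pairwise_sort B (· ≤ ·)).imp_of_mem fun ha hb hab =>
    hv.2 _ (hB ((Finset.mem_sort _).mp ha)) _ (hB ((Finset.mem_sort _).mp hb)) hab

lemma ChoreOrdered.costs_nonneg (hv : ChoreOrdered M v) {B : Finset C} (hB : B ⊆ M) :
    ∀ x ∈ (B.sort (· ≤ ·)).map v, 0 ≤ x := by
  simp only [List.mem_map, Finset.mem_sort]
  rintro _ ⟨c, hc, rfl⟩
  exact hv.1 c (hB hc)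

lemma ChoreOrdered.nthCost_nonneg (hv : ChoreOrdered M v) {B : Finset C} (hB : B ⊆ M)
    (p : ℕ) : 0 ≤ nthCost v B p := by
  rcases List.getD_mem_or_eq_default ((B.sort (· ≤ ·)).map v) 0 (p - 1) with h | h
  · exact hv.costs_nonneg hB _ h
  · exact h.ge

lemma ChoreOrdered.nthCost_antitone (hv : ChoreOrdered M v) {B : Finset C} (hB : B ⊆ M) :
    Antitone (nthCost v B) := fun _ _ hpq =>
  List.getD_antitone_of_pairwise_ge (hv.pairwise_costs hB) (hv.costs_nonneg hB)
    (Nat.sub_le_sub_right hpq 1)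

lemma ChoreOrdered.nthCost_filter (hv : ChoreOrdered M v) {B : Finset C} (hB : B ⊆ M)
    (γ : ℝ) (p : ℕ) :
    nthCost v (B.filter fun c => γ ≤ v c) p =
      if γ ≤ nthCost v B p then nthCost v B p else 0 := by
  unfold nthCost
  rw [Finset.sort_filter, ← Function.comp_def (fun x => decide (γ ≤ x)) v, ← List.filter_map]
  exact List.getD_filter_le_of_pairwise_ge (hv.pairwise_costs hB) γ 0 (p - 1)

lemma ChoreOrdered.lexLe_filter (hv : ChoreOrdered M v) {γ : ℝ} {X Y : Finset C}
    (hX : X ⊆ M) (hY : Y ⊆ M) (h : lexLe v X Y) :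
    lexLe v (X.filter fun c => γ ≤ v c) (Y.filter fun c => γ ≤ v c) := by
  have hfX := hv.nthCost_filter hX γ
  have hfY := hv.nthCost_filter hY γ
  rcases h with h | ⟨q, hq, hpre⟩
  · exact Or.inl fun p => by rw [hfX, hfY, h p]
  by_cases hYq : γ ≤ nthCost v Y q
  · refine Or.inr ⟨q, ?_, fun p hp => by rw [hfX, hfY, hpre p hp]⟩
    rw [hfX, hfY, if_pos hYq]
    split_ifs
    · exact hq
    · exact (hv.nthCost_nonneg hX q).trans_lt hq
  · refine Or.inl fun p => ?_
    rw [hfX, hfY]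
    rcases lt_or_ge p q with hp | hp
    · rw [hpre p hp]
    · have hYp : nthCost v Y p < γ := (hv.nthCost_antitone hY hp).trans_lt (not_le.mp hYq)
      have hXp : nthCost v X p < γ :=
        (hv.nthCost_antitone hX hp).trans_lt (hq.trans (not_le.mp hYq))
      rw [if_neg hXp.not_ge, if_neg hYp.not_ge]

end ChoreOrdered

lemma not_lexLe_of_lexLt {v : C → ℝ} {X Y : Finset C} (hlt : lexLt v X Y) :
    ¬ lexLe v Y X := by
  rintro (hYX | ⟨q', hq', hpre'⟩)
  · exact hlt.2 fun p => (hYX p).symm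
  rcases hlt.1 with hXY | ⟨q, hq, hpre⟩
  · exact hlt.2 hXY
  rcases lt_trichotomy q q' with h | rfl | h
  · exact hq.ne' (hpre' q h)
  · exact hq.not_gt hq'
  · exact hq'.ne' (hpre q' h)

lemma subset_sdiff_priorUnion {M : Finset C} {n : ℕ} {A : Fin n → Finset C}
    (hAM : ∀ k, A k ⊆ M) (hdisj : ∀ i j, i ≠ j → Disjoint (A i) (A j)) (k : Fin n) :
    A k ⊆ M \ priorUnion A k := by
  intro c hc
  refine Finset.mem_sdiff.mpr ⟨hAM k hc, fun hprior => ?_⟩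
  obtain ⟨j, hj, hcj⟩ := Finset.mem_biUnion.mp hprior
  exact Finset.disjoint_left.mp (hdisj j k (Finset.mem_filter.mp hj).2.ne) hcj hc

theorem truncated_benchmark_general {n : ℕ}
    (M : Finset C) (A : Fin n → Finset C) (v : C → ℝ) (τ : ℝ)
    (hv : ChoreOrdered M v) (hFFV : FirstFitValid M A v τ)
    (γ : ℝ)
    (k : Fin n) (B : Finset C) (hB : IsBenchmark M v τ A k B) :
    lexLe v (B.filter fun c => γ ≤ v c) ((A k).filter fun c => γ ≤ v c) ∧
    (lexLt v (B.filter fun c => γ ≤ v c) ((A k).filter fun c => γ ≤ v c) →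
      τ < bundleCost v ((A k).filter fun c => γ ≤ v c)) := by
  obtain ⟨hAM, hdisj, -, hAB⟩ := hFFV
  have hBM : B ⊆ M := hB.1.trans Finset.sdiff_subset
  refine ⟨hv.lexLe_filter hBM (hAM k) (hAB k B hB), fun hlt => ?_⟩
  by_contra! hcost
  have hcand : ((A k).filter fun c => γ ≤ v c) ⊆ M \ priorUnion A k :=
    (Finset.filter_subset _ _).trans (subset_sdiff_priorUnion hAM hdisj k)
  have hle := hv.lexLe_filter (γ := γ) ((Finset.filter_subset _ _).trans (hAM k)) hBM
    (hB.2.2 _ hcand hcost)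
  simp only [Finset.filter_filter, and_self] at hle
  exact not_lexLe_of_lexLt hlt hle

/-- truncating bundles below a cost threshold `γ` preserves the benchmark
inequalities of a First Fit Valid tuple: (a) `A_k[≥γ] ≥lex B_k[≥γ]`, and (b) if the
inequality is strict then `v(A_k[≥γ]) > τ`. -/
theorem truncated_benchmark {n : ℕ}
    (M : Finset C) (A : Fin n → Finset C) (v : C → ℝ) (τ : ℝ)
    (hv : ChoreOrdered M v) (hFFV : FirstFitValid M A v τ)
    (γ : ℝ) (hγ : 0 ≤ γ)
    (k : Fin n) (B : Finset C) (hB : IsBenchmark M v τ A k B) :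
    lexLe v (B.filter fun c => γ ≤ v c) ((A k).filter fun c => γ ≤ v c) ∧
    (lexLt v (B.filter fun c => γ ≤ v c) ((A k).filter fun c => γ ≤ v c) →
      τ < bundleCost v ((A k).filter fun c => γ ≤ v c)) :=
  truncated_benchmark_general M A v τ hv hFFV γ k B hB

end
end
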